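/- Let β be an alternating bicharacter of type II on a finite abelian group T. Then either T ≅ (ℤ₂ × ℤ₂)^m × ℤ₂ or T ≅ (ℤ₂ × ℤ₂)^{m−1} × (ℤ₂ × ℤ₄) for some m, and there exists a symplectic family {a₁, b₁, …, a_m, b_m} in T such that: in the first case {a₁, b₁, …, a_m, b_m, f_β} is a basis of T; in the second case b_m² = f_β and {a₁, b₁, …, a_m, b_m} is a basis of T. -/

import Mathlib

/-- An alternating bicharacter on a (multiplicative) finite abelian group `T`,
with values in `ℝˣ`. -/
def IsAltBichar {T : Type*} [CommGroup T] (β : T → T → ℝˣ) : Prop :=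
  (∀ u v w : T, β (u * v) w = β u w * β v w) ∧
  (∀ u v w : T, β u (v * w) = β u v * β u w) ∧
  (∀ u : T, β u u = 1)

/-- A family `c : ι → T` is a basis of `T` if `T` is the internal direct product of the
cyclic subgroups `⟨c i⟩`, i.e. the natural product map is bijective. -/
def IsBasisFamily {T : Type*} [CommGroup T] {ι : Type*} [Fintype ι] (c : ι → T) : Prop :=
  Function.Bijective (fun x : (∀ i : ι, Subgroup.zpowers (c i)) => ∏ i : ι, (x i : T))

/-- A family `a₁,b₁,…,a_m,b_m` is symplectic with respect to `β` if
`β(aᵢ,bᵢ) = β(bᵢ,aᵢ) = -1` and `β` takes the value `+1` on all other pairs. -/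
def IsSymplecticFamily {T : Type*} [CommGroup T] (β : T → T → ℝˣ) {m : ℕ}
    (a b : Fin m → T) : Prop :=
  (∀ i, β (a i) (b i) = -1 ∧ β (b i) (a i) = -1) ∧
  (∀ i j, β (a i) (a j) = 1) ∧ (∀ i j, β (b i) (b j) = 1) ∧
  (∀ i j, i ≠ j → β (a i) (b j) = 1 ∧ β (b i) (a j) = 1)

/-!
Every square lies in the radical `{1, f}`. Induct on `|T|`. If `β` is trivial then
`T = {1, f}`. If some involutions `u, v` satisfy `β u v = -1`, then `T` is the internal direct
product of `⟨u⟩`, `⟨v⟩` and the orthogonal complement `S` of `{u, v}`; the restriction of `β`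
to `S` is again of type II with radical `{1, f}`, and `u, v` are prepended to the symplectic
basis of `S`. Otherwise there are `u, v` with `β u v = -1`, `u² = 1` and `v² = f`; then `S`
consists of pairwise orthogonal involutions, so it lies in the radical, `S = {1, v²}` and
`{u, v}` is a basis of `T ≅ ℤ₂ × ℤ₄`.

For the isomorphism types, the model group maps onto `T` by sending its standard generators to
the basis, and both groups have order `∏ orderOf`. Independence forbids `c² = f` for basis
elements `c` other than `f` (resp. `b_m`), so all of them have order 2 (and `b_m` has order 4).
-/

def pairFamily {T : Type*} {m : ℕ} (a b : Fin m → T) : Fin m × Bool → T :=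
  fun p => if p.2 then b p.1 else a p.1

section BasisFamily

variable {G : Type*} [CommGroup G] {ι κ : Type*} [Fintype ι] [Fintype κ]

def basisProd (c : ι → G) : (∀ i, Subgroup.zpowers (c i)) →* G where
  toFun x := ∏ i, (x i : G)
  map_one' := by simp
  map_mul' x y := by simp [Finset.prod_mul_distrib]

lemma basisProd_mulSingle [DecidableEq ι] (c : ι → G) (i : ι) (y : Subgroup.zpowers (c i)) :
    basisProd c (Pi.mulSingle i y) = y := by
  rw [basisProd, MonoidHom.coe_mk, OneHom.coe_mk,
    Finset.prod_eq_single i (fun j _ hj => by simp [hj]) (by simp)]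
  simp

lemma IsBasisFamily.zpow_eq_one_of_zpow_eq {c : ι → G} (hc : IsBasisFamily c) {i j : ι}
    (hij : i ≠ j) {k l : ℤ} (h : c i ^ k = c j ^ l) : c j ^ l = 1 := by
  classical
  have hxy := @hc.1 (Pi.mulSingle i ⟨c i ^ k, Subgroup.zpow_mem_zpowers _ _⟩)
    (Pi.mulSingle j ⟨c j ^ l, Subgroup.zpow_mem_zpowers _ _⟩)
    (show basisProd c _ = basisProd c _ by simpa only [basisProd_mulSingle] using h)
  simpa [hij, eq_comm] using congrArg (fun z => (z j : G)) hxy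

lemma isBasisFamily_iff {c : ι → G} : IsBasisFamily c ↔
    (∀ t, ∃ k : ι → ℤ, ∏ i, c i ^ k i = t) ∧
      ∀ k : ι → ℤ, ∏ i, c i ^ k i = 1 → ∀ i, c i ^ k i = 1 := by
  have hmem (k : ι → ℤ) i : c i ^ k i ∈ Subgroup.zpowers (c i) := Subgroup.zpow_mem_zpowers _ _
  have hexp (x : ∀ i, Subgroup.zpowers (c i)) : ∃ k : ι → ℤ, ∀ i, c i ^ k i = x i :=
    ⟨fun i => (Subgroup.mem_zpowers_iff.mp (x i).2).choose,
      fun i => (Subgroup.mem_zpowers_iff.mp (x i).2).choose_spec⟩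
  change Function.Bijective (basisProd c) ↔ _
  rw [Function.Bijective, injective_iff_map_eq_one]
  constructor
  · rintro ⟨hinj, hsurj⟩
    refine ⟨fun t => ?_, fun k hk i => ?_⟩
    · obtain ⟨x, rfl⟩ := hsurj t
      obtain ⟨k, hk⟩ := hexp x
      exact ⟨k, by simp [basisProd, hk]⟩
    · simpa using congrArg (fun x => (x i : G)) (hinj (fun i => ⟨_, hmem k i⟩) hk)
  · rintro ⟨hspan, hindep⟩
    refine ⟨fun x hx => funext fun i => Subtype.ext ?_, fun t => ?_⟩
    · obtain ⟨k, hk⟩ := hexp x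
      simp only [basisProd, MonoidHom.coe_mk, OneHom.coe_mk, ← hk] at hx
      simpa [← hk] using hindep k hx i
    · obtain ⟨k, rfl⟩ := hspan t
      exact ⟨fun i => ⟨_, hmem k i⟩, rfl⟩

lemma IsBasisFamily.comp_equiv {c : ι → G} (hc : IsBasisFamily c) (e : κ ≃ ι) :
    IsBasisFamily (c ∘ e) := by
  rw [isBasisFamily_iff] at hc ⊢
  refine ⟨fun t => ?_, fun k hk j => ?_⟩
  · obtain ⟨k, rfl⟩ := hc.1 t
    exact ⟨k ∘ e, e.prod_comp fun i => c i ^ k i⟩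
  · simpa using hc.2 (k ∘ e.symm) (by rw [← hk, ← e.prod_comp]; simp) (e j)

lemma IsBasisFamily.sum_elim {S : Subgroup G} {c : ι → G} {d : κ → S} (hd : IsBasisFamily d)
    (hspan : ∀ t, ∃ k : ι → ℤ, ∃ s ∈ S, (∏ i, c i ^ k i) * s = t)
    (hindep : ∀ k : ι → ℤ, ∀ s ∈ S, (∏ i, c i ^ k i) * s = 1 → ∀ i, c i ^ k i = 1) :
    IsBasisFamily (Sum.elim c fun j => (d j : G)) := by
  rw [isBasisFamily_iff] at hd ⊢
  have hcoe (l : κ → ℤ) : ((∏ j, d j ^ l j : S) : G) = ∏ j, (d j : G) ^ l j := by simp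
  refine ⟨fun t => ?_, fun k hk => ?_⟩
  · obtain ⟨k, s, hs, rfl⟩ := hspan t
    obtain ⟨l, hl⟩ := hd.1 ⟨s, hs⟩
    exact ⟨Sum.elim k l, by simp [Fintype.prod_sum_type, ← hcoe, hl]⟩
  · rw [Fintype.prod_sum_type] at hk
    simp only [Sum.elim_inl, Sum.elim_inr, ← hcoe] at hk
    have hc : ∀ i, c i ^ k (Sum.inl i) = 1 := hindep (k ∘ Sum.inl) _ (Subtype.prop _) hk
    rw [Finset.prod_eq_one fun i _ => hc i, one_mul, OneMemClass.coe_eq_one] at hk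
    rintro (i | j)
    · exact hc i
    · simpa using congrArg Subtype.val (hd.2 (k ∘ Sum.inr) hk j)

lemma IsBasisFamily.nat_card_eq {c : ι → G} (hc : IsBasisFamily c) :
    Nat.card G = ∏ i, orderOf (c i) := by
  rw [← Nat.card_congr (Equiv.ofBijective _ hc), Nat.card_pi]
  simp only [Nat.card_zpowers]

lemma IsBasisFamily.surjective_of_forall_mem_range {H : Type*} [Group H] {c : ι → G}
    (hc : IsBasisFamily c) (φ : H →* G) (h : ∀ i, c i ∈ φ.range) : Function.Surjective φ := by
  intro t
  obtain ⟨x, rfl⟩ := hc.2 t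
  exact Subgroup.prod_mem _ fun i _ => Subgroup.zpowers_le.mpr (h i) (x i).2

lemma IsBasisFamily.nonempty_mulEquiv {H : Type*} [Group H] [Finite H] {c : ι → G}
    (hc : IsBasisFamily c) (φ : H →* G) (h : ∀ i, c i ∈ φ.range)
    (hcard : Nat.card H = ∏ i, orderOf (c i)) : Nonempty (G ≃* H) :=
  ⟨(MulEquiv.ofBijective φ ((hc.surjective_of_forall_mem_range φ h).bijective_of_nat_card_le
    (by rw [hcard, hc.nat_card_eq]))).symm⟩

end BasisFamily

def zmodLift {G : Type*} [CommGroup G] {n : ℕ} (g : G) (hg : g ^ n = 1) : ZMod n →+ Additive G :=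
  ZMod.lift n ⟨zmultiplesHom (Additive G) (Additive.ofMul g), by simp [← ofMul_pow, hg]⟩

@[simp] lemma zmodLift_one {G : Type*} [CommGroup G] {n : ℕ} (g : G) (hg : g ^ n = 1) :
    zmodLift g hg 1 = Additive.ofMul g := by
  rw [zmodLift, ← Int.cast_one, ZMod.lift_coe]
  simp

section Isomorphism

variable {T : Type*} [CommGroup T]

lemma IsBasisFamily.nonempty_mulEquiv_of_orderOf_eq_two {m : ℕ} {a b : Fin m → T} {f : T}
    (hbasis : IsBasisFamily (Sum.elim (pairFamily a b) fun _ : Unit => f))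
    (ha : ∀ i, orderOf (a i) = 2) (hb : ∀ i, orderOf (b i) = 2) (hf : orderOf f = 2) :
    Nonempty (T ≃* Multiplicative ((Fin m → ZMod 2 × ZMod 2) × ZMod 2)) := by
  have hsq {g : T} (hg : orderOf g = 2) : g ^ 2 = 1 := hg ▸ pow_orderOf_eq_one g
  let φ : Multiplicative ((Fin m → ZMod 2 × ZMod 2) × ZMod 2) →* T :=
    AddMonoidHom.toMultiplicativeLeft <|
      (∑ i, ((zmodLift (a i) (hsq (ha i))).coprod (zmodLift (b i) (hsq (hb i)))).comp
        (Pi.evalAddMonoidHom _ i)).coprod (zmodLift f (hsq hf))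
  refine hbasis.nonempty_mulEquiv φ ?_ ?_
  · rintro (⟨i, _ | _⟩ | _)
    · exact ⟨.ofAdd (Pi.single i (1, 0), 0), by simp [φ, pairFamily, Pi.single_apply, apply_ite]⟩
    · exact ⟨.ofAdd (Pi.single i (0, 1), 0), by simp [φ, pairFamily, Pi.single_apply, apply_ite]⟩
    · exact ⟨.ofAdd (0, 1), by simp [φ]⟩
  · simp [Fintype.prod_sum_type, pairFamily, apply_ite, ha, hb, hf, pow_mul]
    rw [← pow_mul, mul_comm, pow_mul]
    norm_num

lemma IsBasisFamily.nonempty_mulEquiv_of_orderOf_last_eq_four {K : ℕ} {a b : Fin (K + 1) → T}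
    (hbasis : IsBasisFamily (pairFamily a b)) (ha : ∀ i, orderOf (a i) = 2)
    (hb : ∀ i : Fin K, orderOf (b i.castSucc) = 2) (hlast : orderOf (b (Fin.last K)) = 4) :
    Nonempty (T ≃* Multiplicative ((Fin K → ZMod 2 × ZMod 2) × (ZMod 2 × ZMod 4))) := by
  have hpow {g : T} {n : ℕ} (hg : orderOf g = n) : g ^ n = 1 := hg ▸ pow_orderOf_eq_one g
  let φ : Multiplicative ((Fin K → ZMod 2 × ZMod 2) × (ZMod 2 × ZMod 4)) →* T :=
    AddMonoidHom.toMultiplicativeLeft <|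
      (∑ i, ((zmodLift (a i.castSucc) (hpow (ha _))).coprod
        (zmodLift (b i.castSucc) (hpow (hb i)))).comp (Pi.evalAddMonoidHom _ i)).coprod
      ((zmodLift (a (Fin.last K)) (hpow (ha _))).coprod (zmodLift (b (Fin.last K)) (hpow hlast)))
  refine hbasis.nonempty_mulEquiv φ ?_ ?_
  · rintro ⟨i, x⟩
    induction i using Fin.lastCases with
    | last =>
      cases x
      · exact ⟨.ofAdd (0, (1, 0)), by simp [φ, pairFamily]⟩
      · exact ⟨.ofAdd (0, (0, 1)), by simp [φ, pairFamily]⟩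
    | cast j =>
      cases x
      · exact ⟨.ofAdd (Pi.single j (1, 0), 0), by simp [φ, pairFamily, Pi.single_apply, apply_ite]⟩
      · exact ⟨.ofAdd (Pi.single j (0, 1), 0), by simp [φ, pairFamily, Pi.single_apply, apply_ite]⟩
  · simp [Fintype.prod_prod_type, Fin.prod_univ_castSucc, pairFamily, ha, hb, hlast]

end Isomorphism

lemma Units.real_eq_one_or_eq_neg_one_of_pow_eq_one {x : ℝˣ} {n : ℕ} (hn : n ≠ 0)
    (hx : x ^ n = 1) : x = 1 ∨ x = -1 := by
  have hx' : (x : ℝ) ^ n = 1 := by simpa using congrArg Units.val hx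
  rcases (pow_eq_one_iff_of_ne_zero hn).mp hx' with h | ⟨h, -⟩
  · exact Or.inl (Units.ext h)
  · exact Or.inr (Units.ext h)

section SymplecticBasis

variable {T : Type*} [CommGroup T]

/-- The radical of `β` is `{1, f}`; this alone does not force `f ≠ 1`. -/
def IsTypeII (β : T → T → ℝˣ) (f : T) : Prop :=
  ∀ t : T, (∀ u : T, β u t = 1) ↔ (t = 1 ∨ t = f)

def HasSymplecticBasisAdjoin (β : T → T → ℝˣ) (f : T) : Prop :=
  ∃ (m : ℕ) (a b : Fin m → T), IsSymplecticFamily β a b ∧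
    IsBasisFamily (Sum.elim (pairFamily a b) fun _ : Unit => f)

def HasSymplecticBasisSqrt (β : T → T → ℝˣ) (f : T) : Prop :=
  ∃ (K : ℕ) (a b : Fin (K + 1) → T), IsSymplecticFamily β a b ∧ b (Fin.last K) ^ 2 = f ∧
    IsBasisFamily (pairFamily a b)

lemma IsTypeII.hasSymplecticBasisAdjoin_of_forall_eq_one {β : T → T → ℝˣ} {f : T}
    (hII : IsTypeII β f) (htriv : ∀ x y, β x y = 1) : HasSymplecticBasisAdjoin β f := by
  have hT (t : T) : t = 1 ∨ t = f := (hII t).1 fun w => htriv w t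
  refine ⟨0, Fin.elim0, Fin.elim0, ⟨finZeroElim, finZeroElim, finZeroElim, finZeroElim⟩,
    isBasisFamily_iff.2 ⟨fun t => ?_, fun k hk => ?_⟩⟩
  · rcases hT t with rfl | rfl
    · exact ⟨0, by simp⟩
    · exact ⟨fun _ => 1, by simp [Fintype.prod_sum_type]⟩
  · rintro (⟨i, -⟩ | ⟨⟩)
    · exact i.elim0
    · simpa [Fintype.prod_sum_type] using hk

end SymplecticBasis

namespace IsAltBichar

variable {T : Type*} [CommGroup T] {β : T → T → ℝˣ} (hβ : IsAltBichar β)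
include hβ

def leftHom (v : T) : T →* ℝˣ := MonoidHom.mk' (β · v) fun a b => hβ.1 a b v

def rightHom (u : T) : T →* ℝˣ := MonoidHom.mk' (β u ·) (hβ.2.1 u)

lemma zpow_left (u v : T) (k : ℤ) : β (u ^ k) v = β u v ^ k := map_zpow (hβ.leftHom v) u k

lemma pow_left (u v : T) (n : ℕ) : β (u ^ n) v = β u v ^ n := map_pow (hβ.leftHom v) u n

lemma pow_right (u v : T) (n : ℕ) : β u (v ^ n) = β u v ^ n := map_pow (hβ.rightHom u) v n

lemma inv_left (u v : T) : β u⁻¹ v = (β u v)⁻¹ := map_inv (hβ.leftHom v) u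

lemma one_left (v : T) : β 1 v = 1 := map_one (hβ.leftHom v)

lemma one_right (u : T) : β u 1 = 1 := map_one (hβ.rightHom u)

lemma restrict (S : Subgroup T) : IsAltBichar fun s t : S => β s t :=
  ⟨fun _ _ _ => hβ.1 _ _ _, fun _ _ _ => hβ.2.1 _ _ _, fun _ => hβ.2.2 _⟩

lemma ne_one_of_eq_neg_one {u v : T} (h : β u v = -1) : u ≠ 1 := by
  rintro rfl
  norm_num [hβ.one_left, Units.ext_iff] at h

lemma zpow_eq_one_of_zpow_left_eq_one {u v : T} (hu : u ^ 2 = 1) (huv : β u v = -1) {i : ℤ}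
    (h : β (u ^ i) v = 1) : u ^ i = 1 := by
  rw [hβ.zpow_left, huv, neg_one_zpow_eq_ite] at h
  split_ifs at h with heven
  · exact orderOf_dvd_iff_zpow_eq_one.mp <|
      (Int.natCast_dvd_natCast.mpr (orderOf_dvd_of_pow_eq_one hu)).trans heven.two_dvd
  · norm_num [Units.ext_iff] at h

def orth (u v : T) : Subgroup T := (hβ.leftHom u).ker ⊓ (hβ.leftHom v).ker

lemma mem_orth {u v t : T} : t ∈ hβ.orth u v ↔ β t u = 1 ∧ β t v = 1 := Iff.rfl

lemma zpow_eq_one_of_mul_eq_one {u v s : T} (hu : u ^ 2 = 1) (huv : β u v = -1)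
    (hs : β s v = 1) {i j : ℤ} (h : u ^ i * v ^ j * s = 1) : u ^ i = 1 := by
  refine hβ.zpow_eq_one_of_zpow_left_eq_one hu huv ?_
  simpa [hβ.1, hβ.zpow_left, hβ.2.2, hs, hβ.one_left] using congrArg (β · v) h

variable [Finite T]

lemma eq_one_or_eq_neg_one (u v : T) : β u v = 1 ∨ β u v = -1 :=
  Units.real_eq_one_or_eq_neg_one_of_pow_eq_one (orderOf_pos u).ne' <| by
    rw [← hβ.pow_left, pow_orderOf_eq_one, hβ.one_left]

lemma comm (u v : T) : β u v = β v u := by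
  have h := hβ.2.2 (u * v)
  rw [hβ.1, hβ.2.1, hβ.2.1, hβ.2.2, hβ.2.2, one_mul, mul_one] at h
  rcases hβ.eq_one_or_eq_neg_one u v with h1 | h1 <;>
    rcases hβ.eq_one_or_eq_neg_one v u with h2 | h2 <;> simp_all

lemma sq_right (u t : T) : β u (t ^ 2) = 1 := by
  rcases hβ.eq_one_or_eq_neg_one u t with h | h <;> simp [hβ.pow_right, h]

lemma exists_eq_zpow {u v : T} (huv : β u v = -1) (t : T) : ∃ i : ℤ, β t v = β u v ^ i := by
  rcases hβ.eq_one_or_eq_neg_one t v with h | h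
  · exact ⟨0, by simp [h]⟩
  · exact ⟨1, by simp [h, huv]⟩

lemma exists_zpow_mul_mem_orth {u v : T} (huv : β u v = -1) (t : T) :
    ∃ i j : ℤ, ∃ s ∈ hβ.orth u v, u ^ i * v ^ j * s = t := by
  have hvu : β v u = -1 := hβ.comm u v ▸ huv
  obtain ⟨i, hi⟩ := hβ.exists_eq_zpow huv t
  obtain ⟨j, hj⟩ := hβ.exists_eq_zpow hvu t
  refine ⟨i, j, (u ^ i * v ^ j)⁻¹ * t, hβ.mem_orth.2 ⟨?_, ?_⟩, mul_inv_cancel_left _ _⟩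
  · simp [hβ.1, hβ.inv_left, hβ.zpow_left, hβ.2.2, hj]
  · simp [hβ.1, hβ.inv_left, hβ.zpow_left, hβ.2.2, hi]

lemma forall_apply_eq_one_of_mem_orth {u v t : T} (huv : β u v = -1) (ht : t ∈ hβ.orth u v)
    (h : ∀ s ∈ hβ.orth u v, β s t = 1) (w : T) : β w t = 1 := by
  obtain ⟨i, j, s, hs, rfl⟩ := hβ.exists_zpow_mul_mem_orth huv w
  obtain ⟨htu, htv⟩ := hβ.mem_orth.1 ht
  simp [hβ.1, hβ.zpow_left, hβ.comm u t, hβ.comm v t, htu, htv, h s hs]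

lemma isBasisFamily_sum_elim_orth {u v : T} (huv : β u v = -1) (hu : u ^ 2 = 1) (hv : v ^ 2 = 1)
    {κ : Type*} [Fintype κ] {d : κ → hβ.orth u v} (hd : IsBasisFamily d) :
    IsBasisFamily (Sum.elim (fun x : Bool => if x then v else u) fun j => (d j : T)) := by
  have hvu : β v u = -1 := hβ.comm u v ▸ huv
  refine hd.sum_elim (fun t => ?_) (fun k s hs h x => ?_)
  · obtain ⟨i, j, s, hs, rfl⟩ := hβ.exists_zpow_mul_mem_orth huv t
    exact ⟨fun x => if x then j else i, s, hs, by simp [mul_comm (v ^ j)]⟩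
  · simp only [Fintype.prod_bool, if_true, Bool.false_eq_true, if_false] at h
    obtain ⟨hsu, hsv⟩ := hβ.mem_orth.1 hs
    cases x
    · exact hβ.zpow_eq_one_of_mul_eq_one hu huv hsv (by rwa [mul_comm (u ^ _)])
    · exact hβ.zpow_eq_one_of_mul_eq_one hv hvu hsu h

lemma isSymplecticFamily_cons {m : ℕ} {a b : Fin m → T} (h : IsSymplecticFamily β a b)
    {u v : T} (huv : β u v = -1) (ha : ∀ i, a i ∈ hβ.orth u v) (hb : ∀ i, b i ∈ hβ.orth u v) :
    IsSymplecticFamily β (Fin.cons u a) (Fin.cons v b) := by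
  have hvu : β v u = -1 := hβ.comm u v ▸ huv
  obtain ⟨hab, haa, hbb, hne⟩ := h
  have hau i : β u (a i) = 1 := hβ.comm (a i) u ▸ (hβ.mem_orth.1 (ha i)).1
  have hav i : β v (a i) = 1 := hβ.comm (a i) v ▸ (hβ.mem_orth.1 (ha i)).2
  have hbu i : β u (b i) = 1 := hβ.comm (b i) u ▸ (hβ.mem_orth.1 (hb i)).1
  have hbv i : β v (b i) = 1 := hβ.comm (b i) v ▸ (hβ.mem_orth.1 (hb i)).2
  refine ⟨fun i => ?_, fun i j => ?_, fun i j => ?_, fun i j hij => ?_⟩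
  · cases i using Fin.cases <;> simp [huv, hvu, hab]
  all_goals cases i using Fin.cases <;> cases j using Fin.cases <;>
    simp_all [hβ.2.2, hβ.comm (a _) u, hβ.comm (b _) u, hβ.comm (a _) v, hβ.comm (b _) v]

variable {f : T}

lemma sq_eq_one_or_eq (hII : IsTypeII β f) (t : T) : t ^ 2 = 1 ∨ t ^ 2 = f :=
  (hII _).1 fun w => hβ.sq_right w t

lemma mem_orth_of_isTypeII (hII : IsTypeII β f) (u v : T) : f ∈ hβ.orth u v :=
  hβ.mem_orth.2 ⟨hβ.comm u f ▸ (hII f).2 (Or.inr rfl) u, hβ.comm v f ▸ (hII f).2 (Or.inr rfl) v⟩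

lemma isTypeII_orth (hII : IsTypeII β f) {u v : T} (huv : β u v = -1) :
    IsTypeII (fun s t : hβ.orth u v => β s t) ⟨f, hβ.mem_orth_of_isTypeII hII u v⟩ := by
  refine fun t => ⟨fun h => ?_, ?_⟩
  · have := (hII t).1 (hβ.forall_apply_eq_one_of_mem_orth huv t.2 fun s hs => h ⟨s, hs⟩)
    exact this.imp Subtype.ext Subtype.ext
  · rintro (rfl | rfl) w
    exacts [hβ.one_right _, (hII f).2 (Or.inr rfl) w]

lemma hasSymplecticBasisAdjoin_of_orth (hII : IsTypeII β f) {u v : T} (huv : β u v = -1)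
    (hu : u ^ 2 = 1) (hv : v ^ 2 = 1)
    (h : HasSymplecticBasisAdjoin (fun s t : hβ.orth u v => β s t)
      ⟨f, hβ.mem_orth_of_isTypeII hII u v⟩) : HasSymplecticBasisAdjoin β f := by
  obtain ⟨m, a, b, hab, hbasis⟩ := h
  refine ⟨m + 1, Fin.cons u fun i => a i, Fin.cons v fun i => b i,
    hβ.isSymplecticFamily_cons hab huv (fun i => (a i).2) (fun i => (b i).2), ?_⟩
  convert (hβ.isBasisFamily_sum_elim_orth huv hu hv hbasis).comp_equiv
    ((((finSuccEquiv m).prodCongr (Equiv.refl Bool)).trans optionProdEquiv).sumCongr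
      (Equiv.refl Unit) |>.trans (Equiv.sumAssoc _ _ _)) using 1
  funext x
  rcases x with ⟨i, x⟩ | _
  · cases i using Fin.cases <;> cases x <;> simp [pairFamily]
  · rfl

lemma hasSymplecticBasisSqrt_of_orth (hII : IsTypeII β f) {u v : T} (huv : β u v = -1)
    (hu : u ^ 2 = 1) (hv : v ^ 2 = 1)
    (h : HasSymplecticBasisSqrt (fun s t : hβ.orth u v => β s t)
      ⟨f, hβ.mem_orth_of_isTypeII hII u v⟩) : HasSymplecticBasisSqrt β f := by
  obtain ⟨K, a, b, hab, hlast, hbasis⟩ := h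
  refine ⟨K + 1, Fin.cons u fun i => a i, Fin.cons v fun i => b i,
    hβ.isSymplecticFamily_cons hab huv (fun i => (a i).2) (fun i => (b i).2), ?_, ?_⟩
  · simpa [← Fin.succ_last] using congrArg Subtype.val hlast
  convert (hβ.isBasisFamily_sum_elim_orth huv hu hv hbasis).comp_equiv
    (((finSuccEquiv (K + 1)).prodCongr (Equiv.refl Bool)).trans optionProdEquiv) using 1
  funext ⟨i, x⟩
  cases i using Fin.cases <;> cases x <;> simp [pairFamily]

lemma exists_sq_eq_one_sq_eq (hII : IsTypeII β f) (hf : f ^ 2 = 1) {x y : T}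
    (hxy : β x y = -1) (hpair : ∀ u v, β u v = -1 → u ^ 2 = 1 → v ^ 2 ≠ 1) :
    ∃ u v, β u v = -1 ∧ u ^ 2 = 1 ∧ v ^ 2 = f := by
  rcases hβ.sq_eq_one_or_eq hII x with hx | hx <;> rcases hβ.sq_eq_one_or_eq hII y with hy | hy
  · exact absurd hy (hpair x y hxy hx)
  · exact ⟨x, y, hxy, hx, hy⟩
  · exact ⟨y, x, hβ.comm x y ▸ hxy, hy, hx⟩
  · exact ⟨x * y, y, by rw [hβ.1, hxy, hβ.2.2, mul_one], by rw [mul_pow, hx, hy, ← sq, hf], hy⟩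

lemma hasSymplecticBasisSqrt_of_forall_sq_ne_one (hII : IsTypeII β f) (hf : f ^ 2 = 1)
    {u v : T} (huv : β u v = -1) (hu : u ^ 2 = 1) (hv : v ^ 2 = f)
    (hpair : ∀ x y, β x y = -1 → x ^ 2 = 1 → y ^ 2 ≠ 1) : HasSymplecticBasisSqrt β f := by
  have hvu : β v u = -1 := hβ.comm u v ▸ huv
  have hsq : ∀ x ∈ hβ.orth u v, x ^ 2 = 1 := by
    intro x hx
    -- if `x² = f`, then `u` and `v * x` are involutions with `β u (v * x) = -1`
    refine (hβ.sq_eq_one_or_eq hII x).resolve_right fun hx2 => hpair u (v * x) ?_ hu ?_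
    · rw [hβ.2.1, huv, hβ.comm u x, (hβ.mem_orth.1 hx).1, mul_one]
    · rw [mul_pow, hv, hx2, ← sq, hf]
  have horth : ∀ x ∈ hβ.orth u v, x = 1 ∨ x = f := fun x hx =>
    (hII x).1 <| hβ.forall_apply_eq_one_of_mem_orth huv hx fun s hs =>
      (hβ.eq_one_or_eq_neg_one s x).resolve_right fun h => hpair s x h (hsq s hs) (hsq x hx)
  refine ⟨0, fun _ => u, fun _ => v, ⟨fun _ => ⟨huv, hvu⟩, fun _ _ => hβ.2.2 u,
    fun _ _ => hβ.2.2 v, fun i j hij => absurd (Subsingleton.elim (α := Fin 1) i j) hij⟩, hv, ?_⟩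
  refine IsBasisFamily.comp_equiv (c := fun x : Bool => if x then v else u) ?_
    (Equiv.uniqueProd Bool (Fin 1))
  rw [isBasisFamily_iff]
  simp only [Fintype.prod_bool, if_true, Bool.false_eq_true, if_false]
  refine ⟨fun t => ?_, fun k hk x => ?_⟩
  · obtain ⟨i, j, s, hs, rfl⟩ := hβ.exists_zpow_mul_mem_orth huv t
    rcases horth s hs with rfl | rfl
    · exact ⟨fun x => if x then j else i, by simp [mul_comm]⟩
    · exact ⟨fun x => if x then j + 2 else i, by simp [zpow_add, hv, mul_comm, mul_left_comm]⟩
  · have hu' : u ^ k false = 1 :=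
      hβ.zpow_eq_one_of_mul_eq_one hu huv (hβ.one_left v) (by rw [mul_one, mul_comm]; exact hk)
    cases x
    · exact hu'
    · simpa [hu'] using hk

theorem hasSymplecticBasis (hf : f ^ 2 = 1) (hII : IsTypeII β f) :
    HasSymplecticBasisAdjoin β f ∨ HasSymplecticBasisSqrt β f := by
  induction h : Nat.card T using Nat.strong_induction_on generalizing T with
  | _ n ih =>
    by_cases htriv : ∀ x y, β x y = 1
    · exact Or.inl (hII.hasSymplecticBasisAdjoin_of_forall_eq_one htriv)
    by_cases hpair : ∃ u v, β u v = -1 ∧ u ^ 2 = 1 ∧ v ^ 2 = 1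
    · obtain ⟨u, v, huv, hu, hv⟩ := hpair
      have hcard : Nat.card (hβ.orth u v) < n :=
        h ▸ Finite.card_subtype_lt (x := u) fun hu' => by simp [(hβ.mem_orth.1 hu').2] at huv
      rcases ih _ hcard (hβ.restrict _) (Subtype.ext hf) (hβ.isTypeII_orth hII huv) rfl with
        hA | hB
      · exact Or.inl (hβ.hasSymplecticBasisAdjoin_of_orth hII huv hu hv hA)
      · exact Or.inr (hβ.hasSymplecticBasisSqrt_of_orth hII huv hu hv hB)
    push Not at htriv hpair
    obtain ⟨x, y, hxy⟩ := htriv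
    obtain ⟨u, v, huv, hu, hv⟩ := hβ.exists_sq_eq_one_sq_eq hII hf
      ((hβ.eq_one_or_eq_neg_one x y).resolve_left hxy) hpair
    exact Or.inr (hβ.hasSymplecticBasisSqrt_of_forall_sq_ne_one hII hf huv hu hv hpair)

lemma orderOf_eq_two_of_isBasisFamily (hII : IsTypeII β f) (hf : f ≠ 1) {ι : Type*}
    [Fintype ι] {c : ι → T} (hc : IsBasisFamily c) {i j : ι} (hij : i ≠ j) {l : ℕ}
    (hj : c j ^ l = f) (hi : c i ≠ 1) : orderOf (c i) = 2 := by
  refine orderOf_eq_prime ((hβ.sq_eq_one_or_eq hII (c i)).resolve_right fun h => hf ?_) hi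
  rw [← hj]
  exact_mod_cast hc.zpow_eq_one_of_zpow_eq hij (k := 2) (l := l) (by exact_mod_cast h.trans hj.symm)

lemma nonempty_mulEquiv_of_adjoin (hII : IsTypeII β f) (hf : orderOf f = 2) {m : ℕ}
    {a b : Fin m → T} (hab : IsSymplecticFamily β a b)
    (hbasis : IsBasisFamily (Sum.elim (pairFamily a b) fun _ : Unit => f)) :
    Nonempty (T ≃* Multiplicative ((Fin m → ZMod 2 × ZMod 2) × ZMod 2)) := by
  have hf1 : f ≠ 1 := by rintro rfl; simp at hf
  have hord (i : Fin m) (x : Bool) (hne : pairFamily a b (i, x) ≠ 1) :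
      orderOf (pairFamily a b (i, x)) = 2 :=
    hβ.orderOf_eq_two_of_isBasisFamily hII hf1 hbasis (i := .inl (i, x)) (j := .inr ())
      Sum.inl_ne_inr (pow_one f) hne
  exact hbasis.nonempty_mulEquiv_of_orderOf_eq_two
    (fun i => hord i false (hβ.ne_one_of_eq_neg_one (hab.1 i).1))
    (fun i => hord i true (hβ.ne_one_of_eq_neg_one (hab.1 i).2)) hf

lemma nonempty_mulEquiv_of_sqrt (hII : IsTypeII β f) (hf : orderOf f = 2) {K : ℕ}
    {a b : Fin (K + 1) → T} (hab : IsSymplecticFamily β a b) (hlast : b (Fin.last K) ^ 2 = f)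
    (hbasis : IsBasisFamily (pairFamily a b)) :
    Nonempty (T ≃* Multiplicative ((Fin K → ZMod 2 × ZMod 2) × (ZMod 2 × ZMod 4))) := by
  have hf1 : f ≠ 1 := by rintro rfl; simp at hf
  have hord (p : Fin (K + 1) × Bool) (hp : p ≠ (Fin.last K, true))
      (hne : pairFamily a b p ≠ 1) : orderOf (pairFamily a b p) = 2 :=
    hβ.orderOf_eq_two_of_isBasisFamily hII hf1 hbasis hp hlast hne
  refine hbasis.nonempty_mulEquiv_of_orderOf_last_eq_four
    (fun i => hord (i, false) (by simp) (hβ.ne_one_of_eq_neg_one (hab.1 i).1))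
    (fun i => hord (i.castSucc, true) (by simp [(Fin.castSucc_lt_last i).ne])
      (hβ.ne_one_of_eq_neg_one (hab.1 _).2)) ?_
  refine orderOf_eq_prime_pow (p := 2) (n := 1) (by simpa [hlast] using hf1) ?_
  rw [show 2 ^ (1 + 1) = 2 * 2 by rfl, pow_mul, hlast, ← hf, pow_orderOf_eq_one]

end IsAltBichar

/-- If `β` is an alternating bicharacter of type II on a finite abelian group `T`
(with radical `{1, f}`, `f` of order 2), then either `T ≅ (ℤ₂×ℤ₂)^m × ℤ₂` or
`T ≅ (ℤ₂×ℤ₂)^{m-1} × (ℤ₂×ℤ₄)` for some `m`, and there is a symplectic family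
`a₁,b₁,…,a_m,b_m` such that in the first case `{a₁,b₁,…,a_m,b_m,f}` is a basis of `T`,
and in the second case `b_m² = f` and `{a₁,b₁,…,a_m,b_m}` is a basis of `T`. -/
theorem stmt4 {T : Type*} [CommGroup T] [Fintype T]
    (β : T → T → ℝˣ) (hβ : IsAltBichar β)
    (f : T) (hf : orderOf f = 2)
    (hII : ∀ t : T, (∀ u : T, β u t = 1) ↔ (t = 1 ∨ t = f)) :
    ∃ m : ℕ, ∃ a b : Fin m → T, IsSymplecticFamily β a b ∧
      ((Nonempty (T ≃* Multiplicative ((Fin m → ZMod 2 × ZMod 2) × ZMod 2)) ∧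
        IsBasisFamily (Sum.elim
          (fun p : Fin m × Bool => if p.2 then b p.1 else a p.1)
          (fun _ : Unit => f))) ∨
       (Nonempty (T ≃* Multiplicative ((Fin (m - 1) → ZMod 2 × ZMod 2) × (ZMod 2 × ZMod 4))) ∧
        ∃ hm : 1 ≤ m, (b ⟨m - 1, by omega⟩) ^ 2 = f ∧
          IsBasisFamily (fun p : Fin m × Bool => if p.2 then b p.1 else a p.1))) := by
  rcases hβ.hasSymplecticBasis (hf ▸ pow_orderOf_eq_one f) hII with
    ⟨m, a, b, hab, hbasis⟩ | ⟨K, a, b, hab, hlast, hbasis⟩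
  · exact ⟨m, a, b, hab, .inl ⟨hβ.nonempty_mulEquiv_of_adjoin hII hf hab hbasis, hbasis⟩⟩
  · exact ⟨K + 1, a, b, hab,
      .inr ⟨hβ.nonempty_mulEquiv_of_sqrt hII hf hab hlast hbasis, Nat.le_add_left 1 K, hlast,
        hbasis⟩⟩
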